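/- arXiv:2602.23884 — 3 statements merged into one kernel-verified Lean document; each statement's English description precedes it below -/
import Mathlib

section
/- Let G and H be finite simple graphs with G connected, and let S be a distance-equalizer set of the corona product G⊙H. If v_i and v_j are distinct vertices of G with B_G(v_i|v_j) = ∅, then (i) v_i ∈ S or v_j ∈ S, and (ii) V(H_i) ⊆ S or V(H_j) ⊆ S. -/
universe u v

variable {V : Type u} {W : Type v}

/-- A distance-equalizer set of a graph: for every pair of distinct vertices outside `S`
there is a vertex of `S` equidistant to both. -/
def IsDistEqSet {α : Type*} (G : SimpleGraph α) (S : Set α) : Prop :=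
  ∀ ⦃x y : α⦄, x ∉ S → y ∉ S → x ≠ y → ∃ w ∈ S, G.dist w x = G.dist w y

/-- The equidistant dimension of a graph: the minimum cardinality of a distance-equalizer set. -/
noncomputable def eqdim {α : Type*} (G : SimpleGraph α) : ℕ :=
  sInf {n | ∃ S : Set α, IsDistEqSet G S ∧ S.ncard = n}

/-- The bisector of two vertices: vertices equidistant to both. -/
def bisector {α : Type*} (G : SimpleGraph α) (x y : α) : Set α :=
  {w | G.dist w x = G.dist w y}

/-- The empty bisector graph of `G`: two distinct vertices are adjacent iff their bisector
in `G` is empty. -/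
def emptyBisector {α : Type*} (G : SimpleGraph α) : SimpleGraph α where
  Adj x y := x ≠ y ∧ bisector G x y = ∅
  symm := by
    constructor
    rintro x y ⟨h1, h2⟩
    refine ⟨h1.symm, Set.eq_empty_iff_forall_notMem.mpr fun w hw => ?_⟩
    exact Set.eq_empty_iff_forall_notMem.mp h2 w
      ((show G.dist w y = G.dist w x from hw).symm)
  loopless := ⟨fun _ h => h.1 rfl⟩

/-- A vertex cover of a graph: a set of vertices meeting every edge. -/
def IsVertexCover {α : Type*} (G : SimpleGraph α) (C : Set α) : Prop :=
  ∀ ⦃x y : α⦄, G.Adj x y → x ∈ C ∨ y ∈ C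

/-- An independent set of a graph: a set of pairwise non-adjacent vertices. -/
def IsIndepSet {α : Type*} (G : SimpleGraph α) (A : Set α) : Prop :=
  ∀ ⦃x y : α⦄, x ∈ A → y ∈ A → ¬ G.Adj x y

/-- The vertex cover number `β(G)`. -/
noncomputable def vcNum {α : Type*} (G : SimpleGraph α) : ℕ :=
  sInf {n | ∃ C : Set α, IsVertexCover G C ∧ C.ncard = n}

/-- The independence number `α(G)`. -/
noncomputable def indepNum {α : Type*} (G : SimpleGraph α) : ℕ :=
  sSup {n | ∃ A : Set α, IsIndepSet G A ∧ A.ncard = n}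

/-- A forward-equalized pair `(X, Y)` of `G`: `X ∪ Y = V(G)` and for every
`a ∈ X \ Y` and `b ∈ Y \ X` there is `w` with `d(w,a) = d(w,b) + 1`. -/
def IsForwardEqualizedPair {α : Type*} (G : SimpleGraph α) (X Y : Set α) : Prop :=
  X ∪ Y = Set.univ ∧
  ∀ ⦃a⦄, a ∈ X \ Y → ∀ ⦃b⦄, b ∈ Y \ X → ∃ w, G.dist w a = G.dist w b + 1

/-- `β*(G)`: the minimum of `|X ∩ Y|` over all pairs of vertex covers `X, Y` of the
empty bisector graph of `G` such that `(X, Y)` is a forward-equalized pair of `G`. -/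
noncomputable def betaStar {α : Type*} (G : SimpleGraph α) : ℕ :=
  sInf {n | ∃ X Y : Set α,
    IsVertexCover (emptyBisector G) X ∧ IsVertexCover (emptyBisector G) Y ∧
    IsForwardEqualizedPair G X Y ∧ (X ∩ Y).ncard = n}

/-- The corona product `G ⊙ H`: one copy of `H` for each vertex `i` of `G` (the vertices
`Sum.inr (i, w)`), with `i` joined to every vertex of its copy. -/
def corona (G : SimpleGraph V) (H : SimpleGraph W) : SimpleGraph (V ⊕ V × W) where
  Adj x y :=
    match x, y with
    | Sum.inl a, Sum.inl b => G.Adj a b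
    | Sum.inl a, Sum.inr p => a = p.1
    | Sum.inr p, Sum.inl a => a = p.1
    | Sum.inr p, Sum.inr q => p.1 = q.1 ∧ H.Adj p.2 q.2
  symm := by
    constructor
    rintro (a | p) (b | q) h
    · exact h.symm
    · exact h
    · exact h
    · exact ⟨h.1.symm, h.2.symm⟩
  loopless := by
    constructor
    rintro (a | p) h
    · exact G.irrefl h
    · exact H.irrefl h.2

/-!
A vertex `x` of `G ⊙ H` has a projection `π x ∈ V(G)` (itself, or the vertex whose copy of `H`
contains it) and a depth `δ x ∈ {0, 1}`. Every edge between different fibres of `π` is an edge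
of `G` between depth-0 vertices, so for `π x ≠ π y` one gets
`d(x, y) = d_G(π x, π y) + δ x + δ y`, while `d(x, y) ≤ δ x + δ y` inside a fibre.
Hence, for `π u ≠ π v` and `δ u = δ v`, a vertex equidistant from `u` and `v` can lie in neither
fibre and projects into `B_G(π u | π v)`. So an empty bisector in `G` gives an empty bisector
in `G ⊙ H`, and a distance-equalizer set must contain one of the two vertices.
-/

open SimpleGraph

lemma IsDistEqSet.mem_or_mem_of_bisector_eq_empty {α : Type*} {G : SimpleGraph α} {S : Set α}
    (hS : IsDistEqSet G S) {x y : α} (hxy : x ≠ y) (hbis : bisector G x y = ∅) :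
    x ∈ S ∨ y ∈ S := by
  by_contra! h
  obtain ⟨w, -, hw⟩ := hS h.1 h.2 hxy
  exact (Set.eq_empty_iff_forall_notMem.mp hbis) w hw

namespace corona

def proj : V ⊕ V × W → V := Sum.elim id Prod.fst

def depth : V ⊕ V × W → ℕ := Sum.elim (fun _ => 0) (fun _ => 1)

@[simp] lemma proj_inl (a : V) : proj (Sum.inl a : V ⊕ V × W) = a := rfl

@[simp] lemma proj_inr (p : V × W) : proj (Sum.inr p) = p.1 := rfl

@[simp] lemma depth_inl (a : V) : depth (Sum.inl a : V ⊕ V × W) = 0 := rfl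

@[simp] lemma depth_inr (p : V × W) : depth (Sum.inr p) = 1 := rfl

lemma depth_le_one (x : V ⊕ V × W) : depth x ≤ 1 := by
  cases x <;> simp

variable {G : SimpleGraph V} {H : SimpleGraph W}

def inlHom (G : SimpleGraph V) (H : SimpleGraph W) : G →g corona G H where
  toFun := Sum.inl
  map_rel' h := h

lemma exists_inl_of_adj_of_proj_ne {x y : V ⊕ V × W} (h : (corona G H).Adj x y)
    (hxy : proj x ≠ proj y) : ∃ a b, x = Sum.inl a ∧ y = Sum.inl b ∧ G.Adj a b := by
  rcases x with a | p <;> rcases y with b | q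
  · exact ⟨a, b, rfl, rfl, h⟩
  · exact absurd h hxy
  · exact absurd (show b = p.1 from h).symm hxy
  · exact absurd h.1 hxy

lemma depth_le_length {a : V} {y : V ⊕ V × W} (p : (corona G H).Walk (Sum.inl a) y) :
    depth y ≤ p.length := by
  cases p with
  | nil => rfl
  | cons _ q => simpa using (depth_le_one y).trans (Nat.le_add_left 1 q.length)

lemma le_length_of_proj_ne (hG : G.Connected) {x y : V ⊕ V × W} (p : (corona G H).Walk x y)
    (hxy : proj x ≠ proj y) : G.dist (proj x) (proj y) + depth x + depth y ≤ p.length := by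
  induction p with
  | nil => exact absurd rfl hxy
  | @cons x z y h q ih =>
    rw [Walk.length_cons]
    by_cases hzx : proj z = proj x
    · have := ih (hzx ▸ hxy)
      rw [hzx] at this
      have := depth_le_one x
      omega
    · obtain ⟨a, b, rfl, rfl, hab⟩ := exists_inl_of_adj_of_proj_ne h (Ne.symm hzx)
      have hdist : G.dist a (proj y) ≤ 1 + G.dist b (proj y) :=
        (hG.dist_triangle).trans_eq (by rw [dist_eq_one_iff_adj.mpr hab])
      by_cases hby : b = proj y
      · have := depth_le_length q
        subst hby
        simp only [proj_inl, depth_inl, dist_self] at hdist ⊢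
        omega
      · have := ih hby
        simp only [proj_inl, depth_inl] at this hdist ⊢
        omega

def liftWalk {a b : V} (p : G.Walk a b) : (corona G H).Walk (Sum.inl a) (Sum.inl b) :=
  p.map (inlHom G H)

lemma length_liftWalk {a b : V} (p : G.Walk a b) : (liftWalk (H := H) p).length = p.length :=
  Walk.length_map _ _

def walkToInl : (x : V ⊕ V × W) → (corona G H).Walk x (Sum.inl (proj x))
  | Sum.inl _ => Walk.nil
  | Sum.inr (a, b) =>
    Walk.cons (show (corona G H).Adj (Sum.inr (a, b)) (Sum.inl a) from rfl) Walk.nil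

lemma length_walkToInl (x : V ⊕ V × W) : (walkToInl (G := G) (H := H) x).length = depth x := by
  cases x <;> rfl

def walkOfProj (x y : V ⊕ V × W) (p : G.Walk (proj x) (proj y)) : (corona G H).Walk x y :=
  (walkToInl x).append ((liftWalk p).append (walkToInl y).reverse)

lemma length_walkOfProj (x y : V ⊕ V × W) (p : G.Walk (proj x) (proj y)) :
    (walkOfProj (H := H) x y p).length = p.length + depth x + depth y := by
  simp only [walkOfProj, Walk.length_append, length_liftWalk, Walk.length_reverse,
    length_walkToInl]
  omega

lemma reachable (hG : G.Connected) (x y : V ⊕ V × W) : (corona G H).Reachable x y :=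
  ⟨walkOfProj x y (hG (proj x) (proj y)).some⟩

lemma dist_le (hG : G.Connected) (x y : V ⊕ V × W) :
    (corona G H).dist x y ≤ G.dist (proj x) (proj y) + depth x + depth y := by
  obtain ⟨p, hp⟩ := (hG (proj x) (proj y)).exists_walk_length_eq_dist
  calc (corona G H).dist x y ≤ (walkOfProj x y p).length := SimpleGraph.dist_le _
    _ = G.dist (proj x) (proj y) + depth x + depth y := by rw [length_walkOfProj, hp]

lemma dist_eq_of_proj_ne (hG : G.Connected) {x y : V ⊕ V × W} (hxy : proj x ≠ proj y) :
    (corona G H).dist x y = G.dist (proj x) (proj y) + depth x + depth y := by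
  refine le_antisymm (dist_le hG x y) ?_
  obtain ⟨p, hp⟩ := (reachable hG x y).exists_walk_length_eq_dist
  exact hp ▸ le_length_of_proj_ne hG p hxy

lemma proj_ne_of_mem_bisector (hG : G.Connected) {u v z : V ⊕ V × W} (huv : proj u ≠ proj v)
    (hdepth : depth u = depth v) (hz : z ∈ bisector (corona G H) u v) : proj z ≠ proj u := by
  intro hzu
  have hnear := dist_le (H := H) hG z u
  have hfar := dist_eq_of_proj_ne (H := H) hG (hzu ▸ huv : proj z ≠ proj v)
  have hpos := hG.pos_dist_of_ne huv
  rw [hzu, G.dist_self] at hnear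
  rw [hzu] at hfar
  have : (corona G H).dist z u = (corona G H).dist z v := hz
  omega

lemma proj_mem_bisector (hG : G.Connected) {u v z : V ⊕ V × W} (huv : proj u ≠ proj v)
    (hdepth : depth u = depth v) (hz : z ∈ bisector (corona G H) u v) :
    proj z ∈ bisector G (proj u) (proj v) := by
  have hzu := dist_eq_of_proj_ne (H := H) hG (proj_ne_of_mem_bisector hG huv hdepth hz)
  have hzv := dist_eq_of_proj_ne (H := H) hG
    (proj_ne_of_mem_bisector hG huv.symm hdepth.symm (Eq.symm hz : z ∈ bisector (corona G H) v u))
  have : (corona G H).dist z u = (corona G H).dist z v := hz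
  show G.dist (proj z) (proj u) = G.dist (proj z) (proj v)
  omega

lemma bisector_eq_empty (hG : G.Connected) {u v : V ⊕ V × W} (huv : proj u ≠ proj v)
    (hdepth : depth u = depth v) (hbis : bisector G (proj u) (proj v) = ∅) :
    bisector (corona G H) u v = ∅ :=
  Set.eq_empty_of_forall_notMem fun _ hz =>
    Set.eq_empty_iff_forall_notMem.mp hbis _ (proj_mem_bisector hG huv hdepth hz)

end corona

theorem corona_distEqSet_of_bisector_empty_general
    (G : SimpleGraph V) (H : SimpleGraph W) (hG : G.Connected)
    (S : Set (V ⊕ V × W)) (hS : IsDistEqSet (corona G H) S)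
    (i j : V) (hij : i ≠ j) (hbis : bisector G i j = ∅) :
    (Sum.inl i ∈ S ∨ Sum.inl j ∈ S) ∧
    ({x : V ⊕ V × W | ∃ w : W, x = Sum.inr (i, w)} ⊆ S ∨
      {x : V ⊕ V × W | ∃ w : W, x = Sum.inr (j, w)} ⊆ S) := by
  have key : ∀ u v : V ⊕ V × W, corona.proj u = i → corona.proj v = j →
      corona.depth u = corona.depth v → u ∈ S ∨ v ∈ S := by
    rintro u v rfl rfl hdepth
    exact hS.mem_or_mem_of_bisector_eq_empty (fun h => hij (congrArg corona.proj h))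
      (corona.bisector_eq_empty hG hij hdepth hbis)
  refine ⟨key _ _ rfl rfl rfl, ?_⟩
  by_contra! h
  obtain ⟨⟨_, ⟨w₁, rfl⟩, h₁⟩, ⟨_, ⟨w₂, rfl⟩, h₂⟩⟩ := And.imp Set.not_subset.mp Set.not_subset.mp h
  exact (key (Sum.inr (i, w₁)) (Sum.inr (j, w₂)) rfl rfl rfl).elim h₁ h₂

/-- If `S` is a distance-equalizer set of `G ⊙ H` and `i ≠ j` are vertices
of `G` with empty bisector, then `vᵢ ∈ S` or `vⱼ ∈ S`, and `V(Hᵢ) ⊆ S` or `V(Hⱼ) ⊆ S`. -/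
theorem corona_distEqSet_of_bisector_empty [Fintype V] [Fintype W]
    (G : SimpleGraph V) (H : SimpleGraph W) (hG : G.Connected)
    (S : Set (V ⊕ V × W)) (hS : IsDistEqSet (corona G H) S)
    (i j : V) (hij : i ≠ j) (hbis : bisector G i j = ∅) :
    (Sum.inl i ∈ S ∨ Sum.inl j ∈ S) ∧
    ({x : V ⊕ V × W | ∃ w : W, x = Sum.inr (i, w)} ⊆ S ∨
      {x : V ⊕ V × W | ∃ w : W, x = Sum.inr (j, w)} ⊆ S) :=
  corona_distEqSet_of_bisector_empty_general G H hG S hS i j hij hbis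
end

section
/- For every integer n ≥ 2 and every finite simple graph H, the corona product of the path P_n with H satisfies ξ(P_n⊙H) = ⌊n/2⌋·n(H) + ⌈n/2⌉. -/
universe u v

variable {V : Type u} {W : Type v}

open SimpleGraph Finset

/-!
In `G ⊙ H` the distance between two vertices is the `G`-distance of their base vertices plus
one for each of them lying in a copy of `H`, except for two vertices of the same copy, which
are at distance at most `2`. On `Pₙ ⊙ H`, give the path vertex `vᵢ` level `i` and the vertices of
the copy `Hᵢ` level `i + 1`; all other distances then have the parity of the sum of the levels.
So a vertex equidistant from two vertices of different level parity lies in the copy of one of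
them, and then these two are at distance at most `2`. Hence a distance-equalizer set `S` contains
`vᵢ` or `vⱼ` when `i ≢ j (mod 2)`, all of `Hᵢ` or all of `Hⱼ` when `i ≢ j`, and `vᵢ` or all of `Hⱼ`
when `i ≠ j` and `i ≡ j`; counting the path vertices and the whole copies in `S` gives
`|S| ≥ ⌊n/2⌋·n(H) + ⌈n/2⌉`. Conversely, two vertices of odd level are equidistant from a vertex of
even level at their midpoint, so the vertices of even level form a distance-equalizer set, and
there are exactly that many of them.
-/

namespace SimpleGraph

variable {G : SimpleGraph V} {u v : V}

theorem Reachable.le_add_dist_of_adj_le (f : V → ℕ) (hf : ∀ ⦃x y⦄, G.Adj x y → f x ≤ f y + 1)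
    (h : G.Reachable u v) : f u ≤ f v + G.dist u v := by
  obtain ⟨p, hp⟩ := h.exists_walk_length_eq_dist
  rw [← hp]
  clear hp h
  induction p with
  | nil => simp
  | cons hadj p ih =>
    rw [Walk.length_cons]
    have := hf hadj
    omega

theorem dist_le_of_forall_exists_adj_lt (f : V → ℕ)
    (hf : ∀ x, x ≠ v → ∃ y, G.Adj x y ∧ f y < f x) (u : V) : G.dist u v ≤ f u := by
  suffices ∀ k u, f u = k → ∃ p : G.Walk u v, p.length ≤ k by
    obtain ⟨p, hp⟩ := this _ u rfl
    exact (dist_le p).trans hp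
  intro k
  induction k using Nat.strong_induction_on with
  | _ k ih =>
    intro u hu
    by_cases huv : u = v
    · subst huv
      exact ⟨.nil, Nat.zero_le _⟩
    · obtain ⟨y, hadj, hy⟩ := hf u huv
      obtain ⟨p, hp⟩ := ih (f y) (hu ▸ hy) y rfl
      exact ⟨.cons hadj p, by rw [Walk.length_cons]; omega⟩

theorem pathGraph_dist {n : ℕ} (i j : Fin n) : (pathGraph n).dist i j = Nat.dist i j := by
  refine le_antisymm
    (dist_le_of_forall_exists_adj_lt (G := pathGraph n) (fun x => Nat.dist x j) ?_ i) ?_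
  · intro x hx
    rcases lt_or_gt_of_ne (Fin.val_ne_of_ne hx) with h | h
    · exact ⟨⟨x + 1, by omega⟩, pathGraph_adj.2 (.inl rfl), by simp only [Nat.dist]; omega⟩
    · exact ⟨⟨x - 1, by omega⟩, pathGraph_adj.2 (.inr (by simp only; omega)),
        by simp only [Nat.dist]; omega⟩
  · have hlip : ∀ ⦃x y : Fin n⦄, (pathGraph n).Adj x y → Nat.dist x j ≤ Nat.dist y j + 1 := by
      intro x y h
      rw [pathGraph_adj] at h
      simp only [Nat.dist]
      omega
    simpa using (pathGraph_preconnected n i j).le_add_dist_of_adj_le _ hlip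

end SimpleGraph

theorem Fin.card_filter_val_mod_two (n : ℕ) :
    #{i : Fin n | i.val % 2 = 0} = (n + 1) / 2 ∧ #{i : Fin n | i.val % 2 = 1} = n / 2 := by
  induction n with
  | zero => simp
  | succ n ih =>
    have h0 : ∀ k : ℕ, (k + 1) % 2 = 0 ↔ k % 2 = 1 := by omega
    have h1 : ∀ k : ℕ, (k + 1) % 2 = 1 ↔ k % 2 = 0 := by omega
    simp only [Fin.card_filter_univ_succ', Fin.val_zero, Fin.val_succ, h0, h1, ih]
    simp
    omega

theorem Fin.div_two_le_card_of_parity {n : ℕ} {A : Finset (Fin n)}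
    (hA : ∀ i j : Fin n, i.val % 2 ≠ j.val % 2 → i ∈ A ∨ j ∈ A) : n / 2 ≤ #A := by
  obtain ⟨hE, hO⟩ := Fin.card_filter_val_mod_two n
  by_cases h : ∀ j : Fin n, j.val % 2 = 1 → j ∈ A
  · exact hO ▸ card_le_card fun j hj => h j (by simpa using hj)
  · push Not at h
    obtain ⟨j, hj, hjA⟩ := h
    have : #{i : Fin n | i.val % 2 = 0} ≤ #A :=
      card_le_card fun i hi => (hA i j (by simp at hi; omega)).resolve_right hjA
    omega

theorem le_card_add_mul_card {n m : ℕ} (hn : 2 ≤ n) (hm : 1 ≤ m) {P C : Finset (Fin n)}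
    (hP : ∀ i j : Fin n, i.val % 2 ≠ j.val % 2 → i ∈ P ∨ j ∈ P)
    (hC : ∀ i j : Fin n, i.val % 2 ≠ j.val % 2 → i ∈ C ∨ j ∈ C)
    (hPC : ∀ i j : Fin n, i ≠ j → i.val % 2 = j.val % 2 → i ∈ P ∨ j ∈ C) :
    n / 2 * m + (n + 1) / 2 ≤ #P + m * #C := by
  have hE := (Fin.card_filter_val_mod_two n).1
  have hOP := Fin.div_two_le_card_of_parity hP
  have hOC := Fin.div_two_le_card_of_parity hC
  have hOE : n / 2 ≤ (n + 1) / 2 := by omega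
  by_cases hEP : ∀ i : Fin n, i.val % 2 = 0 → i ∈ P
  · have : (n + 1) / 2 ≤ #P := hE ▸ card_le_card fun i hi => hEP i (by simpa using hi)
    nlinarith
  push Not at hEP
  obtain ⟨i₀, hi₀, hi₀P⟩ := hEP
  have hEC : ∀ j : Fin n, j ≠ i₀ → j.val % 2 = 0 → j ∈ C := fun j hj hj0 =>
    (hPC i₀ j (Ne.symm hj) (by omega)).resolve_left hi₀P
  by_cases hi₀C : i₀ ∈ C
  · have : (n + 1) / 2 ≤ #C := hE ▸ card_le_card fun j hj => by
      by_cases hji : j = i₀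
      · exact hji ▸ hi₀C
      · exact hEC j hji (by simpa using hj)
    nlinarith
  · have hC₀ : n - 1 ≤ #C := by
      have hsub : univ.erase i₀ ⊆ C := fun j hj => by
        rcases Nat.mod_two_eq_zero_or_one j.val with h | h
        · exact hEC j (ne_of_mem_erase hj) h
        · exact (hC i₀ j (by omega)).resolve_left hi₀C
      simpa [card_erase_of_mem] using card_le_card hsub
    have hmC := Nat.mul_le_mul_left m hC₀
    rw [show n - 1 = n / 2 + ((n + 1) / 2 - 1) by omega, mul_add] at hmC
    have := Nat.le_mul_of_pos_left ((n + 1) / 2 - 1) hm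
    have : 1 ≤ n / 2 := by omega
    have : (n + 1) / 2 = (n + 1) / 2 - 1 + 1 := by omega
    linarith

namespace Corona

@[simp]
def col : V ⊕ V × W → V
  | .inl a => a
  | .inr p => p.1

@[simp]
def depth : V ⊕ V × W → ℕ
  | .inl _ => 0
  | .inr _ => 1

@[simp]
def SameCopy : V ⊕ V × W → V ⊕ V × W → Prop
  | .inr p, .inr q => p.1 = q.1
  | .inl _, _ => False
  | .inr _, .inl _ => False

lemma depth_le_one (x : V ⊕ V × W) : depth x ≤ 1 := by
  cases x <;> simp

section

variable {G : SimpleGraph V} {H : SimpleGraph W}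

lemma exists_walk_length_eq (hG : G.Preconnected) (x y : V ⊕ V × W) :
    ∃ p : (corona G H).Walk x y, p.length = G.dist (col x) (col y) + depth x + depth y := by
  have toBase : ∀ x : V ⊕ V × W, ∃ p : (corona G H).Walk x (.inl (col x)), p.length = depth x
    | .inl _ => ⟨.nil, rfl⟩
    | .inr p => ⟨.cons (show (corona G H).Adj (.inr p) (.inl p.1) from rfl) .nil, rfl⟩
  obtain ⟨px, hpx⟩ := toBase x
  obtain ⟨py, hpy⟩ := toBase y
  obtain ⟨q, hq⟩ := (hG (col x) (col y)).exists_walk_length_eq_dist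
  refine ⟨px.append ((q.map ⟨Sum.inl, id⟩).append py.reverse), ?_⟩
  simp only [Walk.length_append, Walk.length_map, Walk.length_reverse, hpx, hq, hpy]
  omega

lemma le_dist_of_not_sameCopy (hG : G.Preconnected) {x y : V ⊕ V × W} (h : ¬SameCopy x y) :
    G.dist (col x) (col y) + depth x + depth y ≤ (corona G H).dist x y := by
  classical
  let f z := if SameCopy z y then 0 else G.dist (col z) (col y) + depth z + depth y
  have hlip : ∀ ⦃z z'⦄, (corona G H).Adj z z' → f z ≤ f z' + 1 := by
    rintro (a | ⟨a, w⟩) (b | ⟨b, w'⟩) hadj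
    · have hab : G.Adj a b := hadj
      have := hab.reachable.dist_triangle_left (col y)
      rw [dist_eq_one_iff_adj.2 hab] at this
      rcases y with c | ⟨c, u⟩ <;> simp_all [f] <;> omega
    · obtain rfl : a = b := hadj
      rcases y with c | ⟨c, u⟩
      · simp [f, add_assoc]
      · by_cases hac : a = c <;> simp [f, hac, add_assoc]
    · obtain rfl : b = a := hadj
      rcases y with c | ⟨c, u⟩
      · simp [f]
      · by_cases hbc : b = c <;> simp [f, hbc]
    · obtain ⟨rfl, -⟩ : a = b ∧ H.Adj w w' := hadj
      rcases y with c | ⟨c, u⟩ <;> exact Nat.le_succ _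
  have hfy : f y = 0 := by rcases y with c | ⟨c, u⟩ <;> simp [f]
  obtain ⟨p, -⟩ := exists_walk_length_eq (H := H) hG x y
  have := p.reachable.le_add_dist_of_adj_le f hlip
  rwa [hfy, zero_add, show f x = _ from if_neg h] at this

theorem dist_eq_of_not_sameCopy (hG : G.Preconnected) {x y : V ⊕ V × W} (h : ¬SameCopy x y) :
    (corona G H).dist x y = G.dist (col x) (col y) + depth x + depth y := by
  obtain ⟨p, hp⟩ := exists_walk_length_eq (H := H) hG x y
  exact le_antisymm (hp ▸ dist_le p) (le_dist_of_not_sameCopy hG h)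

theorem dist_le_two_of_sameCopy {x y : V ⊕ V × W} (h : SameCopy x y) :
    (corona G H).dist x y ≤ 2 := by
  obtain ⟨⟨a, w⟩, ⟨b, w'⟩, rfl, rfl⟩ : ∃ p q : V × W, x = .inr p ∧ y = .inr q := by
    rcases x with _ | p <;> rcases y with _ | q <;> simp_all
  obtain rfl : a = b := h
  exact dist_le (.cons (show (corona G H).Adj (.inr (a, w)) (.inl a) from rfl)
    (.cons (show (corona G H).Adj (.inl a) (.inr (a, w')) from rfl) .nil))

end

section

variable {n : ℕ} {H : SimpleGraph W}

def level (x : Fin n ⊕ Fin n × W) : ℕ := (col x).val + depth x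

lemma level_eq_of_sameCopy {x y : Fin n ⊕ Fin n × W} (h : SameCopy x y) : level x = level y := by
  rcases x with _ | p <;> rcases y with _ | q <;> simp_all [level]

lemma dist_eq_natDist {x y : Fin n ⊕ Fin n × W} (h : ¬SameCopy x y) :
    (corona (pathGraph n) H).dist x y = Nat.dist (col x).val (col y).val + depth x + depth y := by
  rw [dist_eq_of_not_sameCopy (pathGraph_preconnected n) h, pathGraph_dist]

lemma dist_mod_two {x y : Fin n ⊕ Fin n × W} (h : ¬SameCopy x y) :
    (corona (pathGraph n) H).dist x y % 2 = (level x + level y) % 2 := by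
  rw [dist_eq_natDist h]
  simp only [level, Nat.dist]
  omega

lemma sameCopy_of_dist_eq {x y z : Fin n ⊕ Fin n × W} (hxy : level x % 2 ≠ level y % 2)
    (hz : (corona (pathGraph n) H).dist z x = (corona (pathGraph n) H).dist z y) :
    SameCopy z x ∨ SameCopy z y := by
  by_contra! h
  have := dist_mod_two (H := H) h.1
  have := dist_mod_two (H := H) h.2
  omega

lemma dist_eq_of_sameCopy_left {x y z : Fin n ⊕ Fin n × W} (hzy : SameCopy z y)
    (hxy : level x % 2 ≠ level y % 2) :
    (corona (pathGraph n) H).dist z x = (corona (pathGraph n) H).dist y x := by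
  have hzx : ¬SameCopy z x := fun h =>
    hxy (by rw [← level_eq_of_sameCopy h, level_eq_of_sameCopy hzy])
  have hyx : ¬SameCopy y x := fun h => hxy (by rw [level_eq_of_sameCopy h])
  rcases z with _ | ⟨c, u⟩ <;> rcases y with _ | ⟨c', u'⟩ <;> simp only [SameCopy] at hzy
  subst hzy
  rw [dist_eq_natDist hzx, dist_eq_natDist hyx]
  rfl

variable {S : Set (Fin n ⊕ Fin n × W)}

lemma inl_mem_or_inl_mem (hS : IsDistEqSet (corona (pathGraph n) H) S) {i j : Fin n}
    (hij : i.val % 2 ≠ j.val % 2) : .inl i ∈ S ∨ .inl j ∈ S := by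
  by_contra! h
  obtain ⟨z, -, hz⟩ := hS h.1 h.2 fun h' => hij (by rw [Sum.inl_injective h'])
  rcases sameCopy_of_dist_eq (by simpa [level] using hij) hz with h | h <;>
    rcases z with _ | _ <;> simp at h

lemma mem_or_mem_of_three_le_dist (hS : IsDistEqSet (corona (pathGraph n) H) S)
    {x y : Fin n ⊕ Fin n × W} (hxy : level x % 2 ≠ level y % 2)
    (hd : 3 ≤ (corona (pathGraph n) H).dist x y) : x ∈ S ∨ y ∈ S := by
  by_contra! h
  obtain ⟨z, -, hz⟩ := hS h.1 h.2 (by rintro rfl; exact hxy rfl)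
  rcases sameCopy_of_dist_eq hxy hz with hzx | hzy
  · have := dist_le_two_of_sameCopy (G := pathGraph n) (H := H) hzx
    rw [dist_eq_of_sameCopy_left hzx hxy.symm] at hz
    omega
  · have := dist_le_two_of_sameCopy (G := pathGraph n) (H := H) hzy
    rw [dist_eq_of_sameCopy_left hzy hxy, dist_comm] at hz
    omega

lemma inr_mem_or_inr_mem (hS : IsDistEqSet (corona (pathGraph n) H) S) {i j : Fin n}
    (hij : i.val % 2 ≠ j.val % 2) (w w' : W) : .inr (i, w) ∈ S ∨ .inr (j, w') ∈ S := by
  have hne : i.val ≠ j.val := fun h => hij (h ▸ rfl)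
  refine mem_or_mem_of_three_le_dist hS (by simp [level]; omega) ?_
  rw [dist_eq_natDist (by simpa [Fin.ext_iff] using hne)]
  simp only [col, depth, Nat.dist]
  omega

lemma inl_mem_or_inr_mem (hS : IsDistEqSet (corona (pathGraph n) H) S) {i j : Fin n}
    (hne : i ≠ j) (hij : i.val % 2 = j.val % 2) (w : W) : .inl i ∈ S ∨ .inr (j, w) ∈ S := by
  have hne : i.val ≠ j.val := Fin.val_ne_of_ne hne
  refine mem_or_mem_of_three_le_dist hS (by simp [level]; omega) ?_
  rw [dist_eq_natDist (by simp)]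
  simp only [col, depth, Nat.dist]
  omega

lemma le_ncard_of_isDistEqSet [Fintype W] [Nonempty W] (hn : 2 ≤ n)
    (hS : IsDistEqSet (corona (pathGraph n) H) S) :
    n / 2 * Fintype.card W + (n + 1) / 2 ≤ S.ncard := by
  classical
  set P : Finset (Fin n) := {i | .inl i ∈ S}
  set C : Finset (Fin n) := {i | ∀ w, .inr (i, w) ∈ S}
  have hP : ∀ i j : Fin n, i.val % 2 ≠ j.val % 2 → i ∈ P ∨ j ∈ P := fun i j hij => by
    simpa [P] using inl_mem_or_inl_mem hS hij
  have hC : ∀ i j : Fin n, i.val % 2 ≠ j.val % 2 → i ∈ C ∨ j ∈ C := fun i j hij => by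
    by_contra! h
    obtain ⟨⟨w, hw⟩, w', hw'⟩ : (∃ w, .inr (i, w) ∉ S) ∧ ∃ w, .inr (j, w) ∉ S := by
      simpa [C] using h
    exact (inr_mem_or_inr_mem hS hij w w').elim hw hw'
  have hPC : ∀ i j : Fin n, i ≠ j → i.val % 2 = j.val % 2 → i ∈ P ∨ j ∈ C :=
    fun i j hne hij => by
      by_contra! h
      obtain ⟨hi, w, hw⟩ : .inl i ∉ S ∧ ∃ w, .inr (j, w) ∉ S := by simpa [P, C] using h
      exact (inl_mem_or_inr_mem hS hne hij w).elim hi hw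
  calc n / 2 * Fintype.card W + (n + 1) / 2
      ≤ #P + Fintype.card W * #C := le_card_add_mul_card hn Fintype.card_pos hP hC hPC
    _ = #(P.disjSum (C ×ˢ (univ : Finset W))) := by
      rw [card_disjSum, card_product, card_univ, mul_comm]
    _ ≤ S.ncard := by
      rw [← Set.ncard_coe_finset]
      refine Set.ncard_le_ncard ?_
      rintro (i | ⟨i, w⟩) hx <;> simp_all [P, C]

lemma exists_col_eq_level_even [Nonempty W] (c : Fin n) :
    ∃ z : Fin n ⊕ Fin n × W, col z = c ∧ level z % 2 = 0 := by
  rcases Nat.mod_two_eq_zero_or_one c.val with h | h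
  · exact ⟨.inl c, rfl, by simpa [level] using h⟩
  · exact ⟨.inr (c, Classical.arbitrary W), rfl, by simp [level]; omega⟩

lemma exists_level_even_dist_eq [Nonempty W] {x y : Fin n ⊕ Fin n × W}
    (hx : level x % 2 = 1) (hy : level y % 2 = 1) :
    ∃ z, level z % 2 = 0 ∧
      (corona (pathGraph n) H).dist z x = (corona (pathGraph n) H).dist z y := by
  obtain ⟨c, hc⟩ : ∃ c : Fin n,
      Nat.dist c (col x).val + depth x = Nat.dist c (col y).val + depth y := by
    have := depth_le_one x
    have := depth_le_one y
    have := (col x).isLt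
    have := (col y).isLt
    simp only [level] at hx hy
    -- the midpoint of `x` and `y`; the numerators are even since both levels are odd
    rcases le_total (col x).val (col y).val with h | h
    · exact ⟨⟨((col x).val + (col y).val + depth y - depth x) / 2, by omega⟩,
        by simp only [Nat.dist]; omega⟩
    · exact ⟨⟨((col x).val + (col y).val + depth x - depth y) / 2, by omega⟩,
        by simp only [Nat.dist]; omega⟩
  obtain ⟨z, rfl, hz⟩ := exists_col_eq_level_even (W := W) c
  have hne : ∀ {v : Fin n ⊕ Fin n × W}, level v % 2 = 1 → ¬SameCopy z v :=
    fun hv h => by rw [level_eq_of_sameCopy h] at hz; omega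
  refine ⟨z, hz, ?_⟩
  rw [dist_eq_natDist (hne hx), dist_eq_natDist (hne hy)]
  omega

lemma isDistEqSet_level_even [Nonempty W] :
    IsDistEqSet (corona (pathGraph n) H) {x | level x % 2 = 0} := by
  intro x y hx hy _
  simp only [Set.mem_ofPred_eq, Nat.mod_two_ne_zero] at hx hy
  exact exists_level_even_dist_eq hx hy

lemma ncard_level_even [Fintype W] :
    {x : Fin n ⊕ Fin n × W | level x % 2 = 0}.ncard = n / 2 * Fintype.card W + (n + 1) / 2 := by
  classical
  have : {x : Fin n ⊕ Fin n × W | level x % 2 = 0} =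
      ↑((univ.filter fun i : Fin n => i.val % 2 = 0).disjSum
        ((univ.filter fun i : Fin n => i.val % 2 = 1) ×ˢ (univ : Finset W))) := by
    ext (i | ⟨i, w⟩) <;> simp [level]
    omega
  obtain ⟨hE, hO⟩ := Fin.card_filter_val_mod_two n
  rw [this, Set.ncard_coe_finset, card_disjSum, card_product, card_univ, hE, hO]
  ring

end

end Corona

/-- For `n ≥ 2`, `ξ(Pₙ ⊙ H) = ⌊n/2⌋·n(H) + ⌈n/2⌉`. -/
theorem eqdim_path_corona {W : Type v} [Fintype W] [Nonempty W]
    (n : ℕ) (hn : 2 ≤ n) (H : SimpleGraph W) :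
    eqdim (corona (SimpleGraph.pathGraph n) H) =
      (n / 2) * Fintype.card W + (n + 1) / 2 := by
  have hmem : (n / 2) * Fintype.card W + (n + 1) / 2 ∈
      {k | ∃ S, IsDistEqSet (corona (pathGraph n) H) S ∧ S.ncard = k} :=
    ⟨_, Corona.isDistEqSet_level_even, Corona.ncard_level_even⟩
  refine le_antisymm (Nat.sInf_le hmem) (le_csInf ⟨_, hmem⟩ ?_)
  rintro k ⟨S, hS, rfl⟩
  exact Corona.le_ncard_of_isDistEqSet hn hS
end

section
/- Let G be a finite simple graph of order n(G) ≥ 2 with maximum degree Δ(G) = n(G) − 1 (so G has a universal vertex and is connected), and let H be any finite simple graph. Then ξ(G⊙H) = n(G) if the minimum degree δ(G) ≥ 2, and ξ(G⊙H) = n(H) + n(G) − 1 if δ(G) = 1. -/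
universe u v

variable {V : Type u} {W : Type v}

/-! In `G ⊙ H` the vertex `i` separates its copy `H_i` from the rest of the graph, so seen from
outside, `H_i` lies one step beyond `i`; hence a distance-equalizer set meets every
`{i} ∪ V(H_i)`, and `ξ ≥ n(G)`. When `δ(G) ≥ 2`, any two vertices of `G` have a common
neighbour (the universal vertex, or a second neighbour of the other one), so `V(G)` equalizes
all pairs. When `v` is a leaf with neighbour `x`, `x` separates `{v} ∪ V(H_v)` from the rest;
then no vertex equalizes a vertex of `H_v` with one of `H_x`, so one of these two copies lies in
the set, and `ξ ≥ n(H) + n(G) - 1`. This is attained by `V(H_u)` together with the vertices of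
`G` other than a universal vertex `u`. -/

namespace SimpleGraph

variable {α : Type*} {G : SimpleGraph α}

theorem Reachable.dist_eq_add_dist_of_forall_adj_eq {C : Set α} {x y z : α}
    (hxy : G.Reachable x y) (hC : ∀ ⦃a b⦄, a ∈ C → b ∉ C → G.Adj a b → b = z)
    (hx : x ∉ C) (hy : y ∈ C) : G.dist x y = G.dist x z + G.dist z y := by
  classical
  obtain ⟨p, hp⟩ := hxy.exists_walk_length_eq_dist
  obtain ⟨d, hd, hd₁, hd₂⟩ := p.exists_boundary_dart Cᶜ hx (by simpa using hy)
  have hz : z ∈ p.support :=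
    hC (by simpa using hd₂) hd₁ d.adj.symm ▸ p.dart_fst_mem_support_of_mem_darts hd
  refine le_antisymm ((p.takeUntil z hz).reachable.dist_triangle_left y) ?_
  calc G.dist x z + G.dist z y
      ≤ (p.takeUntil z hz).length + (p.dropUntil z hz).length :=
        add_le_add (dist_le _) (dist_le _)
    _ = G.dist x y := by rw [← Walk.length_append, p.take_spec hz, hp]

theorem exists_adj_adj_of_isUniversal [Fintype α] [DecidableRel G.Adj] {u : α}
    (hu : G.IsUniversal u) (hδ : 2 ≤ G.minDegree) (i j : α) :
    ∃ c, G.Adj c i ∧ G.Adj c j := by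
  classical
  have other_neighbor (k : α) : ∃ c, c ≠ u ∧ G.Adj c k := by
    obtain ⟨c, hc, hcu⟩ := Finset.exists_mem_ne
      (lt_of_lt_of_le one_lt_two (hδ.trans ((G.minDegree_le_degree k).trans_eq
        (G.card_neighborFinset_eq_degree k).symm))) u
    exact ⟨c, hcu, ((G.mem_neighborFinset k c).mp hc).symm⟩
  by_cases hi : i = u
  · obtain ⟨c, hcu, hc⟩ := other_neighbor j
    exact ⟨c, hi ▸ (hu (Ne.symm hcu)).symm, hc⟩
  by_cases hj : j = u
  · obtain ⟨c, hcu, hc⟩ := other_neighbor i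
    exact ⟨c, hc, hj ▸ (hu (Ne.symm hcu)).symm⟩
  exact ⟨u, hu (Ne.symm hi), hu (Ne.symm hj)⟩

theorem exists_isUniversal_of_maxDegree_eq [Fintype α] [DecidableRel G.Adj] [Nonempty α]
    (h : G.maxDegree = Fintype.card α - 1) : ∃ u, G.IsUniversal u := by
  obtain ⟨u, hu⟩ := G.exists_maximal_degree_vertex
  exact ⟨u, (G.degree_eq_card_sub_one u).mp (hu ▸ h)⟩

theorem exists_neighborSet_eq_singleton_of_minDegree_eq_one [Fintype α] [DecidableRel G.Adj]
    [Nonempty α] (h : G.minDegree = 1) : ∃ v x, G.neighborSet v = {x} := by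
  obtain ⟨v, hv⟩ := G.exists_minimal_degree_vertex
  obtain ⟨x, hx⟩ := Finset.card_eq_one.mp ((G.card_neighborFinset_eq_degree v).trans (hv ▸ h))
  exact ⟨v, x, by rw [← coe_neighborFinset, hx, Finset.coe_singleton]⟩

end SimpleGraph

theorem Set.ncard_le_ncard_of_surjOn {α β : Type*} [Finite α] {f : α → β} {s : Set α}
    {t : Set β} (h : Set.SurjOn f s t) : t.ncard ≤ s.ncard :=
  (Set.ncard_le_ncard h (Set.toFinite _)).trans (Set.ncard_image_le (Set.toFinite s))

theorem eqdim_eq_of_isDistEqSet {α : Type*} {G : SimpleGraph α} {S : Set α} {k : ℕ}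
    (hS : IsDistEqSet G S) (hk : S.ncard = k) (hmin : ∀ T, IsDistEqSet G T → k ≤ T.ncard) :
    eqdim G = k :=
  le_antisymm (Nat.sInf_le ⟨S, hS, hk⟩) <|
    le_csInf ⟨k, S, hS, hk⟩ fun _ ⟨T, hT, hTk⟩ => hTk ▸ hmin T hT

open SimpleGraph Sum

/-- Sends `i` and the vertices of its copy `H_i` to `i`. -/
def coronaBase : V ⊕ V × W → V :=
  Sum.elim id Prod.fst

@[simp] theorem coronaBase_inl (a : V) : (coronaBase (inl a : V ⊕ V × W)) = a := rfl

@[simp] theorem coronaBase_inr (p : V × W) : (coronaBase (inr p : V ⊕ V × W)) = p.1 := rfl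

section Corona

variable {G : SimpleGraph V} {H : SimpleGraph W}

@[simp] theorem corona_adj_inl_inl {a b : V} :
    (corona G H).Adj (inl a) (inl b) ↔ G.Adj a b := Iff.rfl

@[simp] theorem corona_adj_inl_inr {a : V} {p : V × W} :
    (corona G H).Adj (inl a) (inr p) ↔ a = p.1 := Iff.rfl

@[simp] theorem corona_adj_inr_inl {a : V} {p : V × W} :
    (corona G H).Adj (inr p) (inl a) ↔ a = p.1 := Iff.rfl

@[simp] theorem corona_adj_inr_inr {p q : V × W} :
    (corona G H).Adj (inr p) (inr q) ↔ p.1 = q.1 ∧ H.Adj p.2 q.2 := Iff.rfl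

theorem corona_connected (hG : G.Connected) : (corona G H).Connected := by
  obtain ⟨a⟩ := hG.nonempty
  let ι : G →g corona G H := ⟨inl, id⟩
  have reach_inl (b : V) : (corona G H).Reachable (inl a) (inl b) := (hG a b).map ι
  refine connected_iff_exists_forall_reachable _ |>.mpr ⟨inl a, ?_⟩
  rintro (b | ⟨j, w⟩)
  · exact reach_inl b
  · exact (reach_inl j).trans (Adj.reachable (corona_adj_inl_inr.mpr rfl))

theorem corona_dist_inl_inr_self (i : V) (w : W) :
    (corona G H).dist (inl i) (inr (i, w)) = 1 :=
  dist_eq_one_iff_adj.mpr (corona_adj_inl_inr.mpr rfl)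

theorem corona_dist_inl_inl_of_adj {a b : V} (h : G.Adj a b) :
    (corona G H).dist (inl a) (inl b) = 1 :=
  dist_eq_one_iff_adj.mpr (corona_adj_inl_inl.mpr h)

theorem corona_dist_inr (hG : G.Connected) {x : V ⊕ V × W} {j : V}
    (hx : ∀ w, x ≠ inr (j, w)) (w : W) :
    (corona G H).dist x (inr (j, w)) = (corona G H).dist x (inl j) + 1 := by
  rw [(corona_connected hG x _).dist_eq_add_dist_of_forall_adj_eq (y := inr (j, w))
    (C := Set.range fun w' => inr (j, w')) ?_ (by simpa [eq_comm] using hx) ⟨w, rfl⟩,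
    corona_dist_inl_inr_self]
  rintro _ (b | ⟨k, w'⟩) ⟨w, rfl⟩ hb hadj <;> simp_all

theorem corona_dist_inl_inr (hG : G.Connected) (a j : V) (w : W) :
    (corona G H).dist (inl a) (inr (j, w)) = (corona G H).dist (inl a) (inl j) + 1 :=
  corona_dist_inr hG (by simp) w

theorem corona_dist_inr_inr (hG : G.Connected) {i j : V} (hij : i ≠ j) (w w' : W) :
    (corona G H).dist (inr (i, w)) (inr (j, w')) = (corona G H).dist (inl i) (inl j) + 2 := by
  rw [corona_dist_inr hG (by simp [hij]), SimpleGraph.dist_comm, corona_dist_inl_inr hG,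
    SimpleGraph.dist_comm]

theorem corona_dist_inr_inr_self_le (i : V) (w w' : W) :
    (corona G H).dist (inr (i, w)) (inr (i, w')) ≤ 2 := by
  have h₁ : (corona G H).Adj (inr (i, w)) (inl i) := corona_adj_inr_inl.mpr rfl
  have h₂ : (corona G H).Adj (inl i) (inr (i, w')) := corona_adj_inl_inr.mpr rfl
  exact dist_le (.cons h₁ (.cons h₂ .nil))

theorem corona_dist_inl_of_neighborSet_eq (hG : G.Connected) {v x a : V}
    (hv : G.neighborSet v = {x}) (ha : a ≠ v) :
    (corona G H).dist (inl a) (inl v) = (corona G H).dist (inl a) (inl x) + 1 := by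
  have hvx : G.Adj v x := by simp [← mem_neighborSet, hv]
  rw [(corona_connected hG _ _).dist_eq_add_dist_of_forall_adj_eq (C := coronaBase ⁻¹' {v})
    ?_ (by simpa using ha) rfl, corona_dist_inl_inl_of_adj hvx.symm]
  rintro (b | ⟨b, w⟩) (c | ⟨c, w'⟩) hb hc hadj <;> simp_all [Set.ext_iff]

theorem IsDistEqSet.surjOn_coronaBase [Nonempty W] (hG : G.Connected) {S : Set (V ⊕ V × W)}
    (hS : IsDistEqSet (corona G H) S) : Set.SurjOn coronaBase S Set.univ := by
  intro i _
  obtain ⟨w⟩ := ‹Nonempty W›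
  by_cases hl : inl i ∈ S
  · exact ⟨_, hl, rfl⟩
  by_cases hr : inr (i, w) ∈ S
  · exact ⟨_, hr, rfl⟩
  obtain ⟨s, hs, hd⟩ := hS hl hr (by simp)
  by_contra hno
  have hs_out : ∀ w', s ≠ inr (i, w') := by
    rintro w' rfl
    exact hno ⟨_, hs, rfl⟩
  rw [corona_dist_inr hG hs_out] at hd
  omega

theorem IsDistEqSet.card_le_ncard [Fintype V] [Fintype W] [Nonempty W] (hG : G.Connected)
    {S : Set (V ⊕ V × W)} (hS : IsDistEqSet (corona G H) S) : Fintype.card V ≤ S.ncard := by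
  simpa using Set.ncard_le_ncard_of_surjOn (hS.surjOn_coronaBase hG)

theorem IsDistEqSet.forall_inr_mem_or_forall_inr_mem (hG : G.Connected) {v x : V}
    (hv : G.neighborSet v = {x}) {S : Set (V ⊕ V × W)} (hS : IsDistEqSet (corona G H) S) :
    (∀ w, inr (v, w) ∈ S) ∨ (∀ w, inr (x, w) ∈ S) := by
  by_contra! ⟨⟨w, hw⟩, ⟨w', hw'⟩⟩
  have hvx : G.Adj v x := by simp [← mem_neighborSet, hv]
  have hdvx : (corona G H).dist (inl v) (inl x) = 1 := corona_dist_inl_inl_of_adj hvx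
  obtain ⟨s, -, hd⟩ := hS hw hw' (by simp [hvx.ne])
  rcases s with a | ⟨j, z⟩
  · rw [corona_dist_inl_inr hG, corona_dist_inl_inr hG] at hd
    by_cases hav : a = v
    · subst hav
      rw [dist_self, hdvx] at hd
      omega
    · rw [corona_dist_inl_of_neighborSet_eq hG hv hav] at hd
      omega
  by_cases hjv : j = v
  · subst hjv
    rw [corona_dist_inr_inr hG hvx.ne, hdvx] at hd
    have := corona_dist_inr_inr_self_le (G := G) (H := H) j z w
    omega
  by_cases hjx : j = x
  · subst hjx
    rw [corona_dist_inr_inr hG hvx.ne.symm, SimpleGraph.dist_comm, hdvx] at hd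
    have := corona_dist_inr_inr_self_le (G := G) (H := H) j z w'
    omega
  rw [corona_dist_inr_inr hG hjv, corona_dist_inr_inr hG hjx,
    corona_dist_inl_of_neighborSet_eq hG hv hjv] at hd
  omega

theorem IsDistEqSet.card_add_card_sub_one_le_ncard [Fintype V] [Fintype W] [Nonempty W]
    (hG : G.Connected) {v x : V} (hv : G.neighborSet v = {x}) {S : Set (V ⊕ V × W)}
    (hS : IsDistEqSet (corona G H) S) : Fintype.card W + Fintype.card V - 1 ≤ S.ncard := by
  obtain ⟨t, ht⟩ : ∃ t, ∀ w, inr (t, w) ∈ S :=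
    (hS.forall_inr_mem_or_forall_inr_mem hG hv).elim (⟨v, ·⟩) (⟨x, ·⟩)
  set F : Set (V ⊕ V × W) := Set.range fun w => inr (t, w)
  have hF : F.ncard = Fintype.card W := by
    rw [Set.ncard_range_of_injective (fun _ _ h => by simpa using h), Nat.card_eq_fintype_card]
  have hrest : ({t}ᶜ : Set V).ncard ≤ (S \ F).ncard := by
    refine Set.ncard_le_ncard_of_surjOn (f := coronaBase) fun i hi => ?_
    obtain ⟨s, hs, rfl⟩ := hS.surjOn_coronaBase hG (Set.mem_univ i)
    refine ⟨s, ⟨hs, ?_⟩, rfl⟩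
    rintro ⟨w, rfl⟩
    exact hi rfl
  rw [Set.ncard_compl, Set.ncard_singleton, Nat.card_eq_fintype_card] at hrest
  rw [← Set.ncard_sdiff_add_ncard_of_subset (s := F) (Set.range_subset_iff.mpr ht), hF]
  have := Fintype.card_pos_iff.mpr ⟨t⟩
  omega

theorem isDistEqSet_range_inl (hG : G.Connected) (hG₂ : ∀ i j, ∃ c, G.Adj c i ∧ G.Adj c j) :
    IsDistEqSet (corona G H) (Set.range inl) := by
  intro x y hx hy _
  rw [← Set.mem_compl_iff, Set.compl_range_inl] at hx hy
  obtain ⟨⟨i, w⟩, rfl⟩ := hx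
  obtain ⟨⟨j, w'⟩, rfl⟩ := hy
  obtain ⟨c, hci, hcj⟩ := hG₂ i j
  refine ⟨inl c, ⟨c, rfl⟩, ?_⟩
  rw [corona_dist_inl_inr hG, corona_dist_inl_inr hG, corona_dist_inl_inl_of_adj hci,
    corona_dist_inl_inl_of_adj hcj]

theorem isDistEqSet_of_isUniversal {u : V} (hu : G.IsUniversal u) :
    IsDistEqSet (corona G H) (inl '' {u}ᶜ ∪ Set.range fun w => inr (u, w)) := by
  have hG := Connected.of_isUniversal hu
  have hdu {i : V} (hi : u ≠ i) : (corona G H).dist (inl u) (inl i) = 1 :=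
    corona_dist_inl_inl_of_adj (hu hi)
  rintro (a | ⟨i, w⟩) (b | ⟨j, w'⟩) hx hy hne <;>
    simp only [Set.mem_union, Set.mem_image, Set.mem_compl_iff, Set.mem_singleton_iff,
      Set.mem_range, inl.injEq, inr.injEq, Prod.mk.injEq, reduceCtorEq, and_false, exists_false,
      exists_eq_right, or_false, false_or, not_not] at hx hy
  · exact absurd (by rw [hx, hy]) hne
  · refine ⟨inl j, Or.inl ⟨j, hy ∘ Eq.symm, rfl⟩, ?_⟩
    rw [hx, SimpleGraph.dist_comm, hdu hy, corona_dist_inl_inr_self]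
  · refine ⟨inl i, Or.inl ⟨i, hx ∘ Eq.symm, rfl⟩, ?_⟩
    rw [hy, corona_dist_inl_inr_self, SimpleGraph.dist_comm, hdu hx]
  by_cases hij : i = j
  · subst hij
    exact ⟨inl i, Or.inl ⟨i, hx ∘ Eq.symm, rfl⟩, by rw [corona_dist_inl_inr_self,
      corona_dist_inl_inr_self]⟩
  refine ⟨inr (u, w), Or.inr ⟨w, rfl⟩, ?_⟩
  rw [corona_dist_inr_inr hG hx, corona_dist_inr_inr hG hy, hdu hx, hdu hy]

end Corona

theorem eqdim_corona_of_universal_vertex_general [Fintype V] [Fintype W] [Nonempty W]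
    (G : SimpleGraph V) [DecidableRel G.Adj] (H : SimpleGraph W)
    (hDelta : G.maxDegree = Fintype.card V - 1) :
    (2 ≤ G.minDegree → eqdim (corona G H) = Fintype.card V) ∧
    (G.minDegree = 1 →
      eqdim (corona G H) = Fintype.card W + Fintype.card V - 1) := by
  rcases isEmpty_or_nonempty V with _ | _
  · simp
  obtain ⟨u, hu⟩ := exists_isUniversal_of_maxDegree_eq hDelta
  have hG := Connected.of_isUniversal hu
  refine ⟨fun hδ => ?_, fun hδ => ?_⟩
  · refine eqdim_eq_of_isDistEqSet
      (isDistEqSet_range_inl hG (exists_adj_adj_of_isUniversal hu hδ)) ?_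
      fun T hT => hT.card_le_ncard hG
    rw [Set.ncard_range_of_injective inl_injective, Nat.card_eq_fintype_card]
  · obtain ⟨v, x, hv⟩ := exists_neighborSet_eq_singleton_of_minDegree_eq_one hδ
    refine eqdim_eq_of_isDistEqSet (isDistEqSet_of_isUniversal (H := H) hu) ?_
      fun T hT => hT.card_add_card_sub_one_le_ncard hG hv
    rw [Set.ncard_union_eq (by simp [Set.disjoint_left]),
      Set.ncard_image_of_injective _ inl_injective,
      Set.ncard_range_of_injective (fun _ _ h => by simpa using h), Set.ncard_compl,
      Set.ncard_singleton, Nat.card_eq_fintype_card, Nat.card_eq_fintype_card]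
    have := Fintype.card_pos_iff.mpr ⟨u⟩
    omega

/-- If `G` has order at least 2 and a universal vertex
(`Δ(G) = n(G) − 1`), then `ξ(G ⊙ H) = n(G)` when `δ(G) ≥ 2`, and
`ξ(G ⊙ H) = n(H) + n(G) − 1` when `δ(G) = 1`. -/
theorem eqdim_corona_of_universal_vertex [Fintype V] [Fintype W] [Nonempty W]
    (G : SimpleGraph V) [DecidableRel G.Adj] (H : SimpleGraph W)
    (hn : 2 ≤ Fintype.card V) (hDelta : G.maxDegree = Fintype.card V - 1) :
    (2 ≤ G.minDegree → eqdim (corona G H) = Fintype.card V) ∧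
    (G.minDegree = 1 →
      eqdim (corona G H) = Fintype.card W + Fintype.card V - 1) :=
  eqdim_corona_of_universal_vertex_general G H hDelta
end
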